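/- arXiv:2012.12332 — 6 statements merged into one kernel-verified Lean document; each statement's English description precedes it below -/
import Mathlib

section
/- Let M ∈ LC have moderate growth, i.e., there exists C ≥ 1 such that M_{p+q} ≤ C^{p+q} M_p M_q for all p, q ∈ ℕ. Then the associated function ω_M satisfies condition (ω_6): there exists H ≥ 1 such that 2 ω_M(t) ≤ ω_M(H t) + H for all t ≥ 0. -/
open Filter

/-- The function associated with a weight sequence:
`ω_M(t) = sup_p log (t^p / M_p)` for `t > 0`, and `ω_M(t) = 0` for `t ≤ 0`. -/
noncomputable def omegaM (M : ℕ → ℝ) (t : ℝ) : ℝ :=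
  if t ≤ 0 then 0 else ⨆ p : ℕ, Real.log (t ^ p / M p)

lemma bdd_aux (M : ℕ → ℝ) (hpos : ∀ p, 0 < M p) (hM0 : M 0 = 1)
    (hgrow : Tendsto (fun p : ℕ => (M p) ^ ((1 : ℝ) / (p : ℝ))) atTop atTop)
    (s : ℝ) (hs : 0 < s) :
    BddAbove (Set.range fun p : ℕ => Real.log (s ^ p / M p)) := by
  set f : ℕ → ℝ := fun p => Real.log (s ^ p / M p) with hf
  obtain ⟨N, hN⟩ := (hgrow.eventually_ge_atTop (s + 1)).exists_forall_of_atTop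
  set B : ℝ := (Finset.range (N + 1)).sup' (by simp) f with hB
  have hf0 : f 0 = 0 := by simp [hf, hM0]
  have hB0 : 0 ≤ B := by
    rw [← hf0]
    exact Finset.le_sup' f (by simp)
  refine ⟨B, ?_⟩
  rintro x ⟨p, rfl⟩
  rcases le_or_gt p N with hp | hp
  · exact Finset.le_sup' f (Finset.mem_range.mpr (by omega))
  · have hp1 : p ≠ 0 := by omega
    have h1 : s + 1 ≤ (M p) ^ ((1 : ℝ) / (p : ℝ)) := hN p (by omega)
    have hMp := hpos p
    have h2 : (s + 1) ^ (p : ℝ) ≤ ((M p) ^ ((1 : ℝ) / (p : ℝ))) ^ (p : ℝ) :=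
      Real.rpow_le_rpow (by linarith) h1 (Nat.cast_nonneg p)
    have hpe : (1 : ℝ) / (p : ℝ) * (p : ℝ) = 1 := by
      field_simp
    rw [← Real.rpow_mul hMp.le, hpe, Real.rpow_one, Real.rpow_natCast] at h2
    have h3 : s ^ p ≤ M p := le_trans (pow_le_pow_left₀ hs.le (by linarith) p) h2
    have : f p ≤ 0 := Real.log_nonpos (by positivity) ((div_le_one hMp).mpr h3)
    linarith

/-- If `M ∈ LC` has moderate growth (`M_{p+q} ≤ C^{p+q} M_p M_q`), then `ω_M` satisfies
`(ω_6)`: there is `H ≥ 1` with `2 ω_M(t) ≤ ω_M(H t) + H` for all `t ≥ 0`. -/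
theorem stmt9 (M : ℕ → ℝ) (hpos : ∀ p, 0 < M p)
    (hM0 : M 0 = 1) (hM01 : M 0 ≤ M 1)
    (hlc : ∀ p : ℕ, (M (p + 1)) ^ 2 ≤ M p * M (p + 2))
    (hgrow : Tendsto (fun p : ℕ => (M p) ^ ((1 : ℝ) / (p : ℝ))) atTop atTop)
    (hmg : ∃ C : ℝ, 1 ≤ C ∧ ∀ p q : ℕ, M (p + q) ≤ C ^ (p + q) * M p * M q) :
    ∃ H : ℝ, 1 ≤ H ∧ ∀ t : ℝ, 0 ≤ t → 2 * omegaM M t ≤ omegaM M (H * t) + H := by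
  obtain ⟨C, hC1, hmg⟩ := hmg
  refine ⟨C, hC1, ?_⟩
  intro t ht
  rcases eq_or_lt_of_le ht with h0 | ht
  · rw [← h0]
    simp [omegaM]
    linarith
  · have hC0 : (0 : ℝ) < C := by linarith
    have hCt : 0 < C * t := mul_pos hC0 ht
    rw [omegaM, omegaM, if_neg (not_le.mpr ht), if_neg (not_le.mpr hCt)]
    have hbdd := bdd_aux M hpos hM0 hgrow (C * t) hCt
    have key : ∀ p : ℕ, 2 * Real.log (t ^ p / M p) ≤
        (⨆ q : ℕ, Real.log ((C * t) ^ q / M q)) + C := by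
      intro p
      have hMp := hpos p
      have hM2p := hpos (2 * p)
      have h1 : 2 * Real.log (t ^ p / M p) = Real.log ((t ^ p / M p) ^ 2) := by
        rw [Real.log_pow]; push_cast; ring
      have hm := hmg p p
      rw [← two_mul] at hm
      have h2 : (t ^ p / M p) ^ 2 ≤ (C * t) ^ (2 * p) / M (2 * p) := by
        rw [div_pow, div_le_div_iff₀ (by positivity) hM2p]
        have ht2 : (t ^ p) ^ 2 = t ^ (2 * p) := by rw [← pow_mul, mul_comm]
        rw [ht2, mul_pow]
        nlinarith [mul_le_mul_of_nonneg_left hm (pow_nonneg ht.le (2 * p)),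
          pow_nonneg ht.le (2 * p)]
      have h3 : Real.log ((t ^ p / M p) ^ 2) ≤ Real.log ((C * t) ^ (2 * p) / M (2 * p)) :=
        Real.log_le_log (by positivity) h2
      have h4 : Real.log ((C * t) ^ (2 * p) / M (2 * p)) ≤
          ⨆ q : ℕ, Real.log ((C * t) ^ q / M q) :=
        le_ciSup hbdd (2 * p)
      linarith
    have hsup : (⨆ p : ℕ, Real.log (t ^ p / M p)) ≤
        ((⨆ q : ℕ, Real.log ((C * t) ^ q / M q)) + C) / 2 :=
      ciSup_le fun p => by linarith [key p]
    linarith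
end

section
/- Let N ∈ LC be non-quasianalytic (Σ_{p≥1} 1/ν_p < ∞ where ν_p = N_p/N_{p-1}) and r > 0 with Σ_{p≥1} (1/ν_p)^{1/r} < ∞. Define τ_p := p/(ν_p)^{1/r} + Σ_{j≥p} (1/ν_j)^{1/r} for p ≥ 1, σ_0 := 1, σ_p := τ_1 p / τ_p, and S_p := σ_0 σ_1 ⋯ σ_p. Then the sequence (σ_p)_{p ≥ 1} is nondecreasing; that is, S is log-convex. -/
/-!
With `a_j = (1/ν_j)^{1/r}` one has `τ_p = p a_p + Σ_{j ≥ p} a_j`, hence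
`τ_p - τ_{p+1} = (p + 1)(a_p - a_{p+1}) ≥ 0` because `ν` is nondecreasing. So `σ_p = τ_1 p / τ_p`
is an increasing sequence divided by a decreasing positive one.
-/

open Filter

/-- The paper's `τ_p` when `a_j = (1/ν_j)^{1/r}`. -/
noncomputable def weightedTail (a : ℕ → ℝ) (p : ℕ) : ℝ :=
  p * a p + ∑' j, a (p + j)

section weightedTail

variable {a : ℕ → ℝ} {p : ℕ}

lemma tsum_nat_add_eq_add_tsum (ha : Summable fun j => a (p + j)) :
    ∑' j, a (p + j) = a p + ∑' j, a (p + 1 + j) := by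
  rw [ha.tsum_eq_zero_add]
  simp only [add_zero, add_assoc, add_comm 1]

lemma weightedTail_pos (ha : Summable fun j => a (p + j)) (hnn : ∀ j, 0 ≤ a (p + j))
    (hp : 0 < a p) : 0 < weightedTail a p := by
  have hmul : 0 ≤ (p : ℝ) * a p := mul_nonneg p.cast_nonneg hp.le
  have htsum : 0 < ∑' j, a (p + j) := ha.tsum_pos hnn 0 (by simpa using hp)
  unfold weightedTail
  linarith

lemma weightedTail_succ_le (ha : Summable fun j => a (p + j)) (hp : a (p + 1) ≤ a p) :
    weightedTail a (p + 1) ≤ weightedTail a p := by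
  have hstep : ((p : ℝ) + 1) * a (p + 1) ≤ ((p : ℝ) + 1) * a p :=
    mul_le_mul_of_nonneg_left hp (by positivity)
  unfold weightedTail
  rw [tsum_nat_add_eq_add_tsum ha]
  push_cast
  linarith

end weightedTail

theorem stmt12_general (N : ℕ → ℝ) (hpos : ∀ p, 0 < N p)
    (ν : ℕ → ℝ) (hν : ∀ p : ℕ, ν (p + 1) = N (p + 1) / N p)
    (hνmono : ∀ p : ℕ, 1 ≤ p → ν p ≤ ν (p + 1))
    (r : ℝ) (hr : 0 < r)
    (hsum : Summable (fun p : ℕ => (1 / ν p) ^ ((1 : ℝ) / r)))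
    (τ σS : ℕ → ℝ)
    (hτ : ∀ p : ℕ, 1 ≤ p →
      τ p = (p : ℝ) / (ν p) ^ ((1 : ℝ) / r) +
        ∑' j : ℕ, (1 / ν (p + j)) ^ ((1 : ℝ) / r))
    (hσS : ∀ p : ℕ, 1 ≤ p → σS p = τ 1 * (p : ℝ) / τ p) :
    ∀ p : ℕ, 1 ≤ p → σS p ≤ σS (p + 1) := by
  set a : ℕ → ℝ := fun j => (1 / ν j) ^ ((1 : ℝ) / r)
  have hν_pos : ∀ p, 1 ≤ p → 0 < ν p := by
    rintro (_ | p) hp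
    · omega
    · rw [hν]; exact div_pos (hpos _) (hpos _)
  have ha_pos : ∀ p, 1 ≤ p → 0 < a p := fun p hp =>
    Real.rpow_pos_of_pos (one_div_pos.mpr (hν_pos p hp)) _
  have ha_anti : ∀ p, 1 ≤ p → a (p + 1) ≤ a p := fun p hp =>
    Real.rpow_le_rpow (one_div_pos.mpr (hν_pos _ (by omega))).le
      (one_div_le_one_div_of_le (hν_pos p hp) (hνmono p hp)) (by positivity)
  have ha_tail : ∀ p, Summable fun j => a (p + j) := fun p =>
    ((summable_nat_add_iff p).mpr hsum).congr fun j => by simp only [a, add_comm]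
  have hτ_eq : ∀ p, 1 ≤ p → τ p = weightedTail a p := by
    intro p hp
    have ha_p : a p = 1 / ν p ^ ((1 : ℝ) / r) := by
      simp only [a, Real.div_rpow zero_le_one (hν_pos p hp).le, Real.one_rpow]
    rw [hτ p hp, weightedTail, ha_p, mul_one_div]
  have hτ_pos : ∀ p, 1 ≤ p → 0 < τ p := fun p hp => by
    rw [hτ_eq p hp]
    exact weightedTail_pos (ha_tail p) (fun j => (ha_pos _ (by omega)).le) (ha_pos p hp)
  intro p hp
  rw [hσS p hp, hσS (p + 1) (by omega), hτ_eq p hp, hτ_eq (p + 1) (by omega)]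
  refine div_le_div₀ ?_ ?_ ?_ (weightedTail_succ_le (ha_tail p) (ha_anti p hp))
  · exact mul_nonneg (hτ_pos 1 le_rfl).le (by positivity)
  · exact mul_le_mul_of_nonneg_left (by push_cast; linarith) (hτ_pos 1 le_rfl).le
  · rw [← hτ_eq (p + 1) (by omega)]; exact hτ_pos (p + 1) (by omega)

/-- The descendant `S` of `N^{1/r}` (quotients `σ_p = τ_1 p / τ_p` with
`τ_p = p/(ν_p)^{1/r} + Σ_{j≥p} (1/ν_j)^{1/r}`) is log-convex: its sequence of quotients
`(σ_p)_{p≥1}` is nondecreasing. -/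
theorem stmt12 (N : ℕ → ℝ) (hpos : ∀ p, 0 < N p)
    (hN0 : N 0 = 1) (hN01 : N 0 ≤ N 1)
    (ν : ℕ → ℝ) (hν0 : ν 0 = 1) (hν : ∀ p : ℕ, ν (p + 1) = N (p + 1) / N p)
    (hνmono : ∀ p : ℕ, 1 ≤ p → ν p ≤ ν (p + 1))
    (hNgrow : Tendsto (fun p : ℕ => (N p) ^ ((1 : ℝ) / (p : ℝ))) atTop atTop)
    (hnq : Summable (fun p : ℕ => 1 / ν p))
    (r : ℝ) (hr : 0 < r)
    (hsum : Summable (fun p : ℕ => (1 / ν p) ^ ((1 : ℝ) / r)))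
    (τ σS S : ℕ → ℝ)
    (hτ : ∀ p : ℕ, 1 ≤ p →
      τ p = (p : ℝ) / (ν p) ^ ((1 : ℝ) / r) +
        ∑' j : ℕ, (1 / ν (p + j)) ^ ((1 : ℝ) / r))
    (hσS0 : σS 0 = 1)
    (hσS : ∀ p : ℕ, 1 ≤ p → σS p = τ 1 * (p : ℝ) / τ p)
    (hS : ∀ p : ℕ, S p = ∏ i ∈ Finset.range (p + 1), σS i) :
    ∀ p : ℕ, 1 ≤ p → σS p ≤ σS (p + 1) :=
  stmt12_general N hpos ν hν hνmono r hr hsum τ σS hτ hσS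
end

section
/- Let N ∈ LC with Σ_{p≥1} (1/ν_p)^{1/r} < ∞, and let S be the descendant of N^{1/r} (quotients σ_p = τ_1 p/τ_p, τ_p = p(ν_p)^{-1/r} + Σ_{j≥p}(ν_j)^{-1/r}). Then the pair (S, N^{1/r}) satisfies (γ_1)-mixed condition: sup_{p≥1} (σ_p/p) Σ_{k≥p} (ν_k)^{-1/r} < ∞. Equivalently, with L := S^r, condition (L,N)_{γ_r} holds: sup_{p≥1} (λ_p)^{1/r}/p · Σ_{k≥p} (1/ν_k)^{1/r} < ∞. -/
open Filter

/-- The pair `(S, N^{1/r})`, where `S` is the descendant of `N^{1/r}`, satisfies the mixed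
`(γ_1)` condition `sup_{p≥1} (σ_p/p) Σ_{k≥p} (ν_k)^{-1/r} < ∞`; equivalently, with
`L := S^r` (quotients `λ_p = (σ_p)^r`), condition `(L,N)_{γ_r}` holds:
`sup_{p≥1} (λ_p)^{1/r}/p · Σ_{k≥p} (1/ν_k)^{1/r} < ∞`. -/
theorem stmt14 (N : ℕ → ℝ) (hpos : ∀ p, 0 < N p)
    (hN0 : N 0 = 1) (hN01 : N 0 ≤ N 1)
    (ν : ℕ → ℝ) (hν0 : ν 0 = 1) (hν : ∀ p : ℕ, ν (p + 1) = N (p + 1) / N p)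
    (hνmono : ∀ p : ℕ, 1 ≤ p → ν p ≤ ν (p + 1))
    (hNgrow : Tendsto (fun p : ℕ => (N p) ^ ((1 : ℝ) / (p : ℝ))) atTop atTop)
    (r : ℝ) (hr : 0 < r)
    (hsum : Summable (fun p : ℕ => (1 / ν p) ^ ((1 : ℝ) / r)))
    (τ σS : ℕ → ℝ)
    (hτ : ∀ p : ℕ, 1 ≤ p →
      τ p = (p : ℝ) / (ν p) ^ ((1 : ℝ) / r) +
        ∑' j : ℕ, (1 / ν (p + j)) ^ ((1 : ℝ) / r))
    (hσS0 : σS 0 = 1)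
    (hσS : ∀ p : ℕ, 1 ≤ p → σS p = τ 1 * (p : ℝ) / τ p) :
    (∃ C : ℝ, ∀ p : ℕ, 1 ≤ p →
      σS p / (p : ℝ) * ∑' k : ℕ, (1 / ν (p + k)) ^ ((1 : ℝ) / r) ≤ C) ∧
    (∃ C : ℝ, ∀ p : ℕ, 1 ≤ p →
      ((σS p) ^ r) ^ ((1 : ℝ) / r) / (p : ℝ) *
        ∑' k : ℕ, (1 / ν (p + k)) ^ ((1 : ℝ) / r) ≤ C) := by
  -- ν is positive
  have hνpos : ∀ p, 0 < ν p := by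
    intro p
    cases p with
    | zero => simp [hν0]
    | succ n => rw [hν]; exact div_pos (hpos _) (hpos _)
  -- tail sums are nonnegative
  have htail_nonneg : ∀ p : ℕ, 0 ≤ ∑' k : ℕ, (1 / ν (p + k)) ^ ((1 : ℝ) / r) := by
    intro p
    apply tsum_nonneg
    intro k
    exact Real.rpow_nonneg (one_div_nonneg.mpr (hνpos _).le) _
  -- τ p is positive for p ≥ 1
  have hτpos : ∀ p : ℕ, 1 ≤ p → 0 < τ p := by
    intro p hp
    rw [hτ p hp]
    have h1 : 0 < (p : ℝ) / (ν p) ^ ((1 : ℝ) / r) := by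
      apply div_pos (by exact_mod_cast hp)
      exact Real.rpow_pos_of_pos (hνpos p) _
    linarith [htail_nonneg p]
  -- tail ≤ τ p
  have htail_le : ∀ p : ℕ, 1 ≤ p →
      (∑' k : ℕ, (1 / ν (p + k)) ^ ((1 : ℝ) / r)) ≤ τ p := by
    intro p hp
    rw [hτ p hp]
    have h1 : 0 ≤ (p : ℝ) / (ν p) ^ ((1 : ℝ) / r) :=
      div_nonneg (Nat.cast_nonneg p) (Real.rpow_nonneg (hνpos p).le _)
    linarith
  -- key bound
  have key : ∀ p : ℕ, 1 ≤ p →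
      σS p / (p : ℝ) * ∑' k : ℕ, (1 / ν (p + k)) ^ ((1 : ℝ) / r) ≤ τ 1 := by
    intro p hp
    have hppos : (0 : ℝ) < p := by exact_mod_cast hp
    rw [hσS p hp]
    have hτp := hτpos p hp
    have hτ1 : 0 < τ 1 := hτpos 1 le_rfl
    have : τ 1 * (p : ℝ) / τ p / (p : ℝ) = τ 1 / τ p := by
      field_simp
    rw [this]
    calc τ 1 / τ p * ∑' k : ℕ, (1 / ν (p + k)) ^ ((1 : ℝ) / r)
        ≤ τ 1 / τ p * τ p := by
          apply mul_le_mul_of_nonneg_left (htail_le p hp) (by positivity)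
      _ = τ 1 := by field_simp
  have hσnn : ∀ p : ℕ, 1 ≤ p → 0 ≤ σS p := by
    intro p hp
    rw [hσS p hp]
    have := hτpos p hp
    have := hτpos 1 le_rfl
    positivity
  refine ⟨⟨τ 1, key⟩, ⟨τ 1, ?_⟩⟩
  intro p hp
  have hpow : ((σS p) ^ r) ^ ((1 : ℝ) / r) = σS p := by
    rw [← Real.rpow_mul (hσnn p hp), mul_one_div_cancel hr.ne', Real.rpow_one]
  rw [hpow]
  exact key p hp
end

section
/- Let ω, σ be weight functions with γ(σ,ω) > 1 and let f : [0,∞) → [0,∞) satisfy σ(t) = o(f(t)) as t → ∞. Suppose there exist C > 0, K > H > 1, t_0 ≥ 0 such that ω(K^j t) ≤ C H^j σ(t) for all t ≥ t_0 and all j ∈ ℕ_{>0}. Then there exist weight functions ω̃, σ̃ such that: ω(t) = o(ω̃(t)), σ(t) = o(σ̃(t)), σ̃(t) = o(f(t)) as t → ∞, and there exist C₁ > 0, K > H₁ > 1 with ω̃(K^j t) ≤ C₁ H₁^j σ̃(t) for all large t and all j ≥ 1. -/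
/-!
Both weights are multiplied by one continuous, nondecreasing, unbounded factor `g`, a sum of unit
ramps starting at points `x₀ < x₁ < ⋯` spaced at least `1` apart, so that `n ≤ g ≤ n + 1` on
`[xₙ, xₙ₊₁)`. Taking `xₙ` beyond the point after which `(n + 1)² σ ≤ f` gives `g² σ ≤ f`, hence
`g σ = o(f)`. Taking `xₙ₊₁ ≥ K ^ p xₙ` gives `g (K ^ j t) ≤ g t + j / p + 2`, which by Bernoulli's
inequality is at most `3 (1 + 1/p) ^ j g t` once `g t ≥ 1`; so the ramified condition survives
with `H₁ = (1 + 1/p) H < K`.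
-/

open MeasureTheory Set Filter Asymptotics

/-- A weight function: continuous, nondecreasing, nonnegative on `[0,∞)`, vanishing at `0`,
tending to `∞`. -/
def IsWeightFunction (ω : ℝ → ℝ) : Prop :=
  ContinuousOn ω (Set.Ici 0) ∧ MonotoneOn ω (Set.Ici 0) ∧ (∀ t, 0 ≤ t → 0 ≤ ω t) ∧
    ω 0 = 0 ∧ Filter.Tendsto ω Filter.atTop Filter.atTop

/-- Condition `(σ,ω)_{γ_r}`. -/
def GammaCond (σ ω : ℝ → ℝ) (r : ℝ) : Prop :=
  ∃ C : ℝ, 0 < C ∧ ∀ t : ℝ, 0 ≤ t →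
    IntegrableOn (fun y : ℝ => ω (t * y) / y ^ (1 + 1 / r)) (Set.Ioi 1) ∧
    (∫ y in Set.Ioi (1 : ℝ), ω (t * y) / y ^ (1 + 1 / r)) ≤ C * σ t + C

/-- The mixed growth index `γ(σ,ω)`. -/
noncomputable def gammaIndex (σ ω : ℝ → ℝ) : ENNReal :=
  sSup (ENNReal.ofReal '' {r : ℝ | 0 < r ∧ GammaCond σ ω r})

noncomputable def rampCount (x : ℕ → ℝ) (t : ℝ) : ℝ := ∑' n, min 1 (max 0 (t - x n))

section RampCount

variable {x : ℕ → ℝ}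

lemma add_natCast_le_of_add_one_le (hx : ∀ n, x n + 1 ≤ x (n + 1)) (n : ℕ) :
    x 0 + n ≤ x n := by
  induction n with
  | zero => simp
  | succ n ih => push_cast; linarith [hx n]

lemma monotone_of_add_one_le (hx : ∀ n, x n + 1 ≤ x (n + 1)) : Monotone x :=
  monotone_nat_of_le_succ fun n => by linarith [hx n]

lemma add_one_le_of_add_one_le (hx : ∀ n, x n + 1 ≤ x (n + 1)) {n m : ℕ} (h : n < m) :
    x n + 1 ≤ x m :=
  (hx n).trans (monotone_of_add_one_le hx h)

lemma exists_le_of_add_one_le (hx : ∀ n, x n + 1 ≤ x (n + 1)) (t : ℝ) : ∃ N, t ≤ x N := by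
  obtain ⟨N, hN⟩ := exists_nat_ge (t - x 0)
  exact ⟨N, by linarith [add_natCast_le_of_add_one_le hx N]⟩

lemma exists_le_lt_succ_of_add_one_le (hx : ∀ n, x n + 1 ≤ x (n + 1)) {n : ℕ} {t : ℝ}
    (h : x n ≤ t) : ∃ m, n ≤ m ∧ x m ≤ t ∧ t < x (m + 1) := by
  classical
  have hex : ∃ k, t < x k := by
    obtain ⟨N, hN⟩ := exists_le_of_add_one_le hx (t + 1)
    exact ⟨N, by linarith⟩
  have hn : n < Nat.find hex := by
    by_contra! hle
    linarith [Nat.find_spec hex, monotone_of_add_one_le hx hle]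
  refine ⟨Nat.find hex - 1, by omega, not_lt.1 (Nat.find_min hex (by omega)), ?_⟩
  simpa [Nat.sub_add_cancel (Nat.one_le_of_lt hn)] using Nat.find_spec hex

lemma rampCount_eq_sum (hx : ∀ n, x n + 1 ≤ x (n + 1)) {t : ℝ} {N : ℕ} (hN : t ≤ x N) :
    rampCount x t = ∑ n ∈ Finset.range N, min 1 (max 0 (t - x n)) := by
  refine tsum_eq_sum fun n hn => ?_
  have : x N ≤ x n := monotone_of_add_one_le hx (by simpa using hn)
  simp [max_eq_left (by linarith : t - x n ≤ 0)]

lemma rampCount_nonneg (x : ℕ → ℝ) (t : ℝ) : 0 ≤ rampCount x t :=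
  tsum_nonneg fun _ => le_min zero_le_one (le_max_left _ _)

lemma rampCount_le_natCast (hx : ∀ n, x n + 1 ≤ x (n + 1)) {t : ℝ} {m : ℕ} (h : t ≤ x m) :
    rampCount x t ≤ m := by
  rw [rampCount_eq_sum hx h]
  simpa using Finset.sum_le_sum fun n (_ : n ∈ Finset.range m) => min_le_left 1 (max 0 (t - x n))

lemma natCast_le_rampCount (hx : ∀ n, x n + 1 ≤ x (n + 1)) {t : ℝ} {m : ℕ} (h : x m ≤ t) :
    (m : ℝ) ≤ rampCount x t := by
  obtain ⟨N, hN⟩ := exists_le_of_add_one_le hx t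
  have hmN : m ≤ N := by
    by_contra! hNm
    linarith [add_one_le_of_add_one_le hx hNm]
  rw [rampCount_eq_sum hx hN]
  calc (m : ℝ) = ∑ n ∈ Finset.range m, min 1 (max 0 (t - x n)) := by
        rw [Finset.sum_congr rfl fun n hn => ?_, Finset.sum_const, Finset.card_range, nsmul_one]
        have := add_one_le_of_add_one_le hx (Finset.mem_range.1 hn)
        rw [max_eq_right (by linarith), min_eq_left (by linarith)]
    _ ≤ _ := Finset.sum_le_sum_of_subset_of_nonneg (Finset.range_mono hmN)
        fun _ _ _ => le_min zero_le_one (le_max_left _ _)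

lemma monotone_rampCount (hx : ∀ n, x n + 1 ≤ x (n + 1)) : Monotone (rampCount x) := by
  intro s t hst
  obtain ⟨N, hN⟩ := exists_le_of_add_one_le hx (max s t)
  rw [rampCount_eq_sum hx ((le_max_left s t).trans hN),
    rampCount_eq_sum hx ((le_max_right s t).trans hN)]
  exact Finset.sum_le_sum fun n _ => min_le_min le_rfl (max_le_max le_rfl (by linarith))

lemma continuous_rampCount (hx : ∀ n, x n + 1 ≤ x (n + 1)) : Continuous (rampCount x) := by
  refine continuous_iff_continuousAt.2 fun t => ?_
  obtain ⟨N, hN⟩ := exists_le_of_add_one_le hx (t + 1)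
  have hsum : Continuous fun s => ∑ n ∈ Finset.range N, min 1 (max 0 (s - x n)) := by
    fun_prop
  refine hsum.continuousAt.congr ?_
  filter_upwards [Iio_mem_nhds (show t < x N by linarith)] with s hs
  exact (rampCount_eq_sum hx (le_of_lt hs)).symm

lemma tendsto_rampCount (hx : ∀ n, x n + 1 ≤ x (n + 1)) : Tendsto (rampCount x) atTop atTop := by
  refine tendsto_atTop.2 fun b => ?_
  filter_upwards [eventually_ge_atTop (x ⌈b⌉₊)] with t ht
  exact (Nat.le_ceil b).trans (natCast_le_rampCount hx ht)

end RampCount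

section RampCountGrowth

variable {x : ℕ → ℝ} {K : ℝ} {p : ℕ}

lemma le_pow_mul_of_pow_mul_le (hK : 0 ≤ K)
    (hxK : ∀ n, K ^ p * x n ≤ x (n + 1)) (n i : ℕ) : K ^ (p * i) * x n ≤ x (n + i) := by
  induction i with
  | zero => simp
  | succ i ih =>
    calc K ^ (p * (i + 1)) * x n = K ^ p * (K ^ (p * i) * x n) := by ring
      _ ≤ K ^ p * x (n + i) := by gcongr
      _ ≤ x (n + (i + 1)) := hxK (n + i)

lemma rampCount_pow_mul_le_add (hx : ∀ n, x n + 1 ≤ x (n + 1)) (hx0 : 0 ≤ x 0) (hK : 1 ≤ K)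
    (hp : 0 < p) (hxK : ∀ n, K ^ p * x n ≤ x (n + 1)) {t : ℝ} (ht : x 0 ≤ t) (j : ℕ) :
    rampCount x (K ^ j * t) ≤ rampCount x t + j / p + 2 := by
  obtain ⟨m, -, hmt, htm⟩ := exists_le_lt_succ_of_add_one_le hx ht
  have hjp : j ≤ p * (j / p + 1) := (Nat.lt_mul_div_succ j hp).le
  have hKt : K ^ j * t ≤ x (m + 1 + (j / p + 1)) :=
    calc K ^ j * t ≤ K ^ (p * (j / p + 1)) * x (m + 1) :=
          mul_le_mul (pow_le_pow_right₀ hK hjp) htm.le (by linarith) (by positivity)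
      _ ≤ _ := le_pow_mul_of_pow_mul_le (by linarith) hxK _ _
  calc rampCount x (K ^ j * t) ≤ ((m + 1 + (j / p + 1) : ℕ) : ℝ) := rampCount_le_natCast hx hKt
    _ ≤ m + j / p + 2 := by push_cast; linarith [Nat.cast_div_le (α := ℝ) (m := j) (n := p)]
    _ ≤ rampCount x t + j / p + 2 := by linarith [natCast_le_rampCount hx hmt]

lemma add_mul_add_two_le_three_mul_one_add_pow {a ε : ℝ} (ha : 1 ≤ a) (hε : 0 ≤ ε) (j : ℕ) :
    a + j * ε + 2 ≤ 3 * (1 + ε) ^ j * a := by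
  have hbern := one_add_mul_le_pow (by linarith : -2 ≤ ε) j
  have hjε : 0 ≤ (j : ℝ) * ε := by positivity
  nlinarith

lemma rampCount_pow_mul_le_mul (hx : ∀ n, x n + 1 ≤ x (n + 1)) (hx0 : 0 ≤ x 0) (hK : 1 ≤ K)
    (hp : 0 < p) (hxK : ∀ n, K ^ p * x n ≤ x (n + 1)) {t : ℝ} (ht : x 1 ≤ t) (j : ℕ) :
    rampCount x (K ^ j * t) ≤ 3 * (1 + (p : ℝ)⁻¹) ^ j * rampCount x t := by
  have hg1 : 1 ≤ rampCount x t := by exact_mod_cast natCast_le_rampCount hx ht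
  have ht0 : x 0 ≤ t := (monotone_of_add_one_le hx zero_le_one).trans ht
  calc rampCount x (K ^ j * t) ≤ rampCount x t + j / p + 2 :=
        rampCount_pow_mul_le_add hx hx0 hK hp hxK ht0 j
    _ ≤ _ := add_mul_add_two_le_three_mul_one_add_pow hg1 (by positivity) j

lemma rampCount_sq_mul_norm_le (hx : ∀ n, x n + 1 ≤ x (n + 1)) {σ f : ℝ → ℝ}
    (hσf : ∀ n t, x n ≤ t → ‖σ t‖ ≤ (((n : ℝ) + 1) ^ 2)⁻¹ * ‖f t‖) {t : ℝ} (ht : x 0 ≤ t) :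
    rampCount x t ^ 2 * ‖σ t‖ ≤ ‖f t‖ := by
  obtain ⟨m, -, hmt, htm⟩ := exists_le_lt_succ_of_add_one_le hx ht
  have hg : rampCount x t ≤ (m : ℝ) + 1 := by exact_mod_cast rampCount_le_natCast hx htm.le
  have hg0 := rampCount_nonneg x t
  calc rampCount x t ^ 2 * ‖σ t‖ ≤ ((m : ℝ) + 1) ^ 2 * ((((m : ℝ) + 1) ^ 2)⁻¹ * ‖f t‖) := by
        gcongr
        exact hσf m t hmt
    _ = ‖f t‖ := by field_simp

end RampCountGrowth

lemma exists_seq_add_one_le_of_mul_le (a : ℝ) (T : ℕ → ℝ) :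
    ∃ x : ℕ → ℝ, 0 ≤ x 0 ∧ (∀ n, T n ≤ x n) ∧ ∀ n, x n + 1 ≤ x (n + 1) ∧ a * x n ≤ x (n + 1) := by
  let x : ℕ → ℝ := fun n =>
    Nat.rec (max 0 (T 0)) (fun n xn => max (max (xn + 1) (a * xn)) (T (n + 1))) n
  have hx : ∀ n, x (n + 1) = max (max (x n + 1) (a * x n)) (T (n + 1)) := fun _ => rfl
  refine ⟨x, le_max_left _ _, ?_, fun n => ?_⟩
  · rintro (_ | n)
    · exact le_max_right _ _
    · rw [hx]; exact le_max_right _ _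
  · rw [hx]
    exact ⟨(le_max_left _ _).trans (le_max_left _ _), (le_max_right _ _).trans (le_max_left _ _)⟩

lemma exists_nat_one_add_inv_mul_lt {H K : ℝ} (hH : 0 < H) (hHK : H < K) :
    ∃ p : ℕ, 0 < p ∧ (1 + (p : ℝ)⁻¹) * H < K := by
  obtain ⟨p, hp⟩ := exists_nat_gt (H / (K - H))
  have hp0 : (0 : ℝ) < p := (div_pos hH (sub_pos.2 hHK)).trans hp
  refine ⟨p, Nat.cast_pos.1 hp0, ?_⟩
  have : (p : ℝ)⁻¹ * H < K - H := by
    rw [inv_mul_lt_iff₀ hp0]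
    linarith [(div_lt_iff₀ (sub_pos.2 hHK)).1 hp]
  linarith

lemma IsWeightFunction.mul_left {ω g : ℝ → ℝ} (hω : IsWeightFunction ω)
    (hgc : ContinuousOn g (Ici 0)) (hgm : MonotoneOn g (Ici 0)) (hg0 : ∀ t, 0 ≤ t → 0 ≤ g t)
    (hg : Tendsto g atTop atTop) : IsWeightFunction fun t => g t * ω t := by
  obtain ⟨hωc, hωm, hω0, hω00, hωt⟩ := hω
  refine ⟨hgc.mul hωc, fun a ha b hb hab => ?_, fun t ht => mul_nonneg (hg0 t ht) (hω0 t ht),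
    by simp [hω00], hg.atTop_mul_atTop₀ hωt⟩
  exact mul_le_mul (hgm ha hb hab) (hωm ha hb hab) (hω0 a ha) (hg0 b hb)

lemma isLittleO_mul_left_of_tendsto_atTop {α : Type*} {l : Filter α} {g ω : α → ℝ}
    (hg : Tendsto g l atTop) : ω =o[l] fun t => g t * ω t := by
  simpa [mul_comm] using (isBigO_refl ω l).mul_isLittleO
    ((isLittleO_one_left_iff ℝ).2 (tendsto_norm_atTop_atTop.comp hg))

lemma isLittleO_mul_of_sq_mul_norm_le {α : Type*} {l : Filter α} {g σ f : α → ℝ}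
    (hg : Tendsto g l atTop) (h : ∀ᶠ t in l, g t ^ 2 * ‖σ t‖ ≤ ‖f t‖) :
    (fun t => g t * σ t) =o[l] f := by
  refine isLittleO_iff.2 fun c hc => ?_
  filter_upwards [h, hg.eventually_ge_atTop c⁻¹] with t ht hgt
  have hg0 : 0 < g t := (inv_pos.2 hc).trans_le hgt
  have hcg : 1 ≤ g t * c := (inv_le_iff_one_le_mul₀ hc).1 hgt
  rw [norm_mul, Real.norm_of_nonneg hg0.le]
  calc g t * ‖σ t‖ ≤ g t * ‖σ t‖ * (g t * c) := le_mul_of_one_le_right (by positivity) hcg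
    _ = c * (g t ^ 2 * ‖σ t‖) := by ring
    _ ≤ c * ‖f t‖ := by gcongr

theorem stmt15_general (ω σ f : ℝ → ℝ)
    (hω : IsWeightFunction ω) (hσ : IsWeightFunction σ)
    (hσf : σ =o[atTop] f)
    (C K H t₀ : ℝ) (hC : 0 < C) (hH : 1 < H) (hKH : H < K)
    (hram : ∀ t : ℝ, t₀ ≤ t → ∀ j : ℕ, 1 ≤ j → ω (K ^ j * t) ≤ C * H ^ j * σ t) :
    ∃ ωt σt : ℝ → ℝ, IsWeightFunction ωt ∧ IsWeightFunction σt ∧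
      ω =o[atTop] ωt ∧ σ =o[atTop] σt ∧ σt =o[atTop] f ∧
      ∃ C₁ : ℝ, 0 < C₁ ∧ ∃ H₁ : ℝ, 1 < H₁ ∧ H₁ < K ∧ ∃ t₁ : ℝ,
        ∀ t : ℝ, t₁ ≤ t → ∀ j : ℕ, 1 ≤ j → ωt (K ^ j * t) ≤ C₁ * H₁ ^ j * σt t := by
  obtain ⟨p, hp, hpK⟩ := exists_nat_one_add_inv_mul_lt (by linarith) hKH
  choose T hT using fun n : ℕ =>
    eventually_atTop.1 (hσf.def (c := (((n : ℝ) + 1) ^ 2)⁻¹) (by positivity))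
  obtain ⟨x, hx0, hxT, hx⟩ := exists_seq_add_one_le_of_mul_le (K ^ p) T
  have hx1 : ∀ n, x n + 1 ≤ x (n + 1) := fun n => (hx n).1
  have hg := tendsto_rampCount hx1
  have hmul : ∀ {w}, IsWeightFunction w → IsWeightFunction fun t => rampCount x t * w t :=
    fun hw => hw.mul_left (continuous_rampCount hx1).continuousOn
      ((monotone_rampCount hx1).monotoneOn _) (fun t _ => rampCount_nonneg x t) hg
  have hσ_small : ∀ᶠ t in atTop, rampCount x t ^ 2 * ‖σ t‖ ≤ ‖f t‖ := by
    filter_upwards [eventually_ge_atTop (x 0)] with t ht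
    exact rampCount_sq_mul_norm_le hx1 (fun n t hnt => hT n t ((hxT n).trans hnt)) ht
  refine ⟨fun t => rampCount x t * ω t, fun t => rampCount x t * σ t, hmul hω, hmul hσ,
    isLittleO_mul_left_of_tendsto_atTop hg, isLittleO_mul_left_of_tendsto_atTop hg,
    isLittleO_mul_of_sq_mul_norm_le hg hσ_small, 3 * C, by positivity, (1 + (p : ℝ)⁻¹) * H,
    by nlinarith [inv_pos.2 (show (0 : ℝ) < p by exact_mod_cast hp)], hpK, max t₀ (x 1),
    fun t ht j hj => ?_⟩
  have hxt : x 1 ≤ t := le_of_max_le_right ht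
  have ht0 : 0 ≤ t := (hx0.trans (monotone_of_add_one_le hx1 zero_le_one)).trans hxt
  have hKt : 0 ≤ K ^ j * t := mul_nonneg (pow_nonneg (by linarith) j) ht0
  calc rampCount x (K ^ j * t) * ω (K ^ j * t)
      ≤ (3 * (1 + (p : ℝ)⁻¹) ^ j * rampCount x t) * (C * H ^ j * σ t) :=
        mul_le_mul (rampCount_pow_mul_le_mul hx1 hx0 (by linarith) hp (fun n => (hx n).2) hxt j)
          (hram t (le_of_max_le_left ht) j hj) (hω.2.2.1 _ hKt)
          (mul_nonneg (by positivity) (rampCount_nonneg x t))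
    _ = 3 * C * ((1 + (p : ℝ)⁻¹) * H) ^ j * (rampCount x t * σ t) := by
        rw [mul_pow]; ring

/-- The reduction lemma: given weight functions `ω, σ` with `γ(σ,ω) > 1` (equivalently, the
ramified condition `ω(K^j t) ≤ C H^j σ(t)`), and `f` with `σ = o(f)`, there are weight
functions `ω̃, σ̃` with `ω = o(ω̃)`, `σ = o(σ̃)`, `σ̃ = o(f)`, which again satisfy the
ramified condition `ω̃(K^j t) ≤ C₁ H₁^j σ̃(t)` for some `1 < H₁ < K`, for large `t`. -/
theorem stmt15 (ω σ f : ℝ → ℝ)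
    (hω : IsWeightFunction ω) (hσ : IsWeightFunction σ)
    (hf : ∀ t, 0 ≤ t → 0 ≤ f t)
    (hγ : 1 < gammaIndex σ ω)
    (hσf : σ =o[atTop] f)
    (C K H t₀ : ℝ) (hC : 0 < C) (hH : 1 < H) (hKH : H < K) (ht₀ : 0 ≤ t₀)
    (hram : ∀ t : ℝ, t₀ ≤ t → ∀ j : ℕ, 1 ≤ j → ω (K ^ j * t) ≤ C * H ^ j * σ t) :
    ∃ ωt σt : ℝ → ℝ, IsWeightFunction ωt ∧ IsWeightFunction σt ∧
      ω =o[atTop] ωt ∧ σ =o[atTop] σt ∧ σt =o[atTop] f ∧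
      ∃ C₁ : ℝ, 0 < C₁ ∧ ∃ H₁ : ℝ, 1 < H₁ ∧ H₁ < K ∧ ∃ t₁ : ℝ,
        ∀ t : ℝ, t₁ ≤ t → ∀ j : ℕ, 1 ≤ j → ωt (K ^ j * t) ≤ C₁ * H₁ ^ j * σt t :=
  stmt15_general ω σ f hω hσ hσf C K H t₀ hC hH hKH hram
end

section
/- In the construction of the reduction lemma: let ω be a nondecreasing function [0,∞) → [0,∞) and (x_n)_{n≥1} a strictly increasing sequence with x_1 = 0, satisfying ω(x_n) ≥ 2^{n-i} ω(x_i) for all 1 ≤ i ≤ n−1 and n ≥ 2. Define ω̃(t) := n ω(t) − Σ_{i=1}^n ω(x_i) for t ∈ [x_n, x_{n+1}). Then (n−2) ω(t) ≤ ω̃(t) ≤ n ω(t) for all n ≥ 2 and t ∈ [x_n, x_{n+1}); in particular ω(t) = o(ω̃(t)) as t → ∞. -/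
open Filter Asymptotics Finset

/-!
The growth condition `2 ^ (n - i) ω(x_i) ≤ ω(x_n)` makes `Σ_{i ≤ n} ω(x_i)` at most a geometric
series in `ω(x_n)`, hence at most `2 ω(x_n) ≤ 2 ω(t)` for `t ≥ x_n`; this gives the sandwich.
Since `n → ∞` as `t → ∞`, the lower bound `(n - 2) ω(t) ≤ ω̃(t)` then gives `ω = o(ω̃)`.
-/

theorem sum_Icc_one_half_pow_sub_le_two (n : ℕ) : ∑ i ∈ Icc 1 n, (1 / 2 : ℝ) ^ (n - i) ≤ 2 := by
  calc ∑ i ∈ Icc 1 n, (1 / 2 : ℝ) ^ (n - i) = ∑ j ∈ range n, (1 / 2 : ℝ) ^ j :=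
        sum_nbij' (fun i ↦ n - i) (fun j ↦ n - j)
          (by simp only [mem_Icc, mem_range]; omega) (by simp only [mem_Icc, mem_range]; omega)
          (by simp only [mem_Icc]; omega) (by simp only [mem_range]; omega)
          (fun _ _ ↦ rfl)
    _ ≤ 2 := sum_geometric_two_le n

theorem sum_Icc_le_two_mul_of_two_pow_mul_le {a : ℕ → ℝ} {n : ℕ} (han : 0 ≤ a n)
    (h : ∀ i, 1 ≤ i → i < n → 2 ^ (n - i) * a i ≤ a n) :
    ∑ i ∈ Icc 1 n, a i ≤ 2 * a n := by
  have hterm : ∀ i ∈ Icc 1 n, a i ≤ (1 / 2 : ℝ) ^ (n - i) * a n := by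
    intro i hi
    obtain ⟨hi1, hin⟩ := mem_Icc.mp hi
    rcases hin.lt_or_eq with hin | rfl
    · rw [one_div_pow, one_div_mul_eq_div, le_div_iff₀ (by positivity), mul_comm]
      exact h i hi1 hin
    · simp
  calc ∑ i ∈ Icc 1 n, a i ≤ ∑ i ∈ Icc 1 n, (1 / 2 : ℝ) ^ (n - i) * a n :=
        sum_le_sum hterm
    _ = (∑ i ∈ Icc 1 n, (1 / 2 : ℝ) ^ (n - i)) * a n := (sum_mul ..).symm
    _ ≤ 2 * a n := mul_le_mul_of_nonneg_right (sum_Icc_one_half_pow_sub_le_two n) han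

theorem exists_le_mem_Ico_succ {α : Type*} [LinearOrder α] {x : ℕ → α} {t : α} {N k : ℕ}
    (hNk : N ≤ k) (hN : x N ≤ t) (hk : t < x k) : ∃ m, N ≤ m ∧ x m ≤ t ∧ t < x (m + 1) := by
  classical
  have hNk : N < k := hNk.lt_of_ne (by rintro rfl; exact hk.not_ge hN)
  have hex : ∃ m, N ≤ m ∧ t < x (m + 1) :=
    ⟨k - 1, by omega, by rwa [Nat.sub_add_cancel (by omega)]⟩
  obtain ⟨hNm, hm⟩ := Nat.find_spec hex
  refine ⟨Nat.find hex, hNm, ?_, hm⟩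
  rcases hNm.eq_or_lt with hNm | hNm
  · rwa [← hNm]
  · have hprev := Nat.find_min hex (Nat.sub_one_lt_of_lt hNm)
    rw [Nat.sub_add_cancel (by omega)] at hprev
    exact not_lt.mp fun h ↦ hprev ⟨by omega, h⟩

theorem isLittleO_of_forall_eventually_mul_le {α : Type*} {l : Filter α} {f g : α → ℝ}
    (hf : ∀ᶠ t in l, 0 ≤ f t) (h : ∀ K : ℝ, ∀ᶠ t in l, K * f t ≤ g t) : f =o[l] g := by
  refine isLittleO_iff.mpr fun c hc ↦ ?_
  filter_upwards [hf, h c⁻¹] with t hft ht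
  have hgt : 0 ≤ g t := (mul_nonneg (inv_nonneg.mpr hc.le) hft).trans ht
  rw [Real.norm_of_nonneg hft, Real.norm_of_nonneg hgt]
  calc f t = c * (c⁻¹ * f t) := by field_simp
    _ ≤ c * g t := mul_le_mul_of_nonneg_left ht hc.le

theorem isLittleO_of_eventually_mul_le_on_Ico {α : Type*} [LinearOrder α] [NoMaxOrder α]
    {f g : α → ℝ} {x : ℕ → α} {a : ℕ → ℝ} (hx : Tendsto x atTop atTop)
    (ha : Tendsto a atTop atTop) (hf : ∀ᶠ t in atTop, 0 ≤ f t)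
    (h : ∀ᶠ n in atTop, ∀ t, x n ≤ t → t < x (n + 1) → a n * f t ≤ g t) : f =o[atTop] g := by
  refine isLittleO_of_forall_eventually_mul_le hf fun K ↦ ?_
  obtain ⟨N, hN⟩ := eventually_atTop.mp ((ha.eventually_ge_atTop K).and h)
  filter_upwards [hf, eventually_ge_atTop (x N)] with t hft ht
  obtain ⟨k, hk⟩ := ((hx.eventually_gt_atTop t).and (eventually_ge_atTop N)).exists
  obtain ⟨m, hNm, hmt, htm⟩ := exists_le_mem_Ico_succ hk.2 ht hk.1
  obtain ⟨hKa, hm⟩ := hN m hNm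
  calc K * f t ≤ a m * f t := mul_le_mul_of_nonneg_right hKa hft
    _ ≤ g t := hm t hmt htm

theorem stmt16_general (ω : ℝ → ℝ)
    (hmono : MonotoneOn ω (Set.Ici 0)) (hnn : ∀ t, 0 ≤ t → 0 ≤ ω t)
    (x : ℕ → ℝ) (hx1 : x 1 = 0)
    (hxs : ∀ n : ℕ, 1 ≤ n → x n < x (n + 1))
    (hxtop : Tendsto x atTop atTop)
    (hgrow : ∀ n : ℕ, 2 ≤ n → ∀ i : ℕ, 1 ≤ i → i ≤ n - 1 →
      (2 : ℝ) ^ (n - i) * ω (x i) ≤ ω (x n))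
    (ωt : ℝ → ℝ)
    (hωt : ∀ n : ℕ, 1 ≤ n → ∀ t : ℝ, x n ≤ t → t < x (n + 1) →
      ωt t = (n : ℝ) * ω t - ∑ i ∈ Finset.Icc 1 n, ω (x i)) :
    (∀ n : ℕ, 2 ≤ n → ∀ t : ℝ, x n ≤ t → t < x (n + 1) →
      ((n : ℝ) - 2) * ω t ≤ ωt t ∧ ωt t ≤ (n : ℝ) * ω t) ∧
    ω =o[atTop] ωt := by
  have hx_mono : MonotoneOn x (Set.Ici 1) :=
    monotoneOn_nat_Ici_of_le_succ fun k hk ↦ (hxs k hk).le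
  have hx_nonneg : ∀ n, 1 ≤ n → 0 ≤ x n := fun n hn ↦ hx1 ▸ hx_mono Set.self_mem_Ici hn hn
  have sandwich : ∀ n : ℕ, 2 ≤ n → ∀ t : ℝ, x n ≤ t → t < x (n + 1) →
      ((n : ℝ) - 2) * ω t ≤ ωt t ∧ ωt t ≤ (n : ℝ) * ω t := by
    intro n hn t hnt htn
    have hxn := hx_nonneg n (by omega)
    have hωxn_le : ω (x n) ≤ ω t := hmono hxn (hxn.trans hnt) hnt
    have hsum_le : ∑ i ∈ Icc 1 n, ω (x i) ≤ 2 * ω (x n) :=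
      sum_Icc_le_two_mul_of_two_pow_mul_le (hnn _ hxn) fun i hi hin ↦ hgrow n hn i hi (by omega)
    have hsum_nonneg : 0 ≤ ∑ i ∈ Icc 1 n, ω (x i) :=
      sum_nonneg fun i hi ↦ hnn _ (hx_nonneg i (mem_Icc.mp hi).1)
    rw [hωt n (by omega) t hnt htn]
    constructor <;> linarith
  refine ⟨sandwich, isLittleO_of_eventually_mul_le_on_Ico hxtop
    (tendsto_atTop_add_const_right _ (-2) tendsto_natCast_atTop_atTop) ?_ ?_⟩
  · filter_upwards [eventually_ge_atTop 0] with t ht using hnn t ht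
  · filter_upwards [eventually_ge_atTop 2] with n hn t hnt htn
    exact (sandwich n hn t hnt htn).1

/-- Sandwich estimate in the reduction lemma: if `ω̃(t) = n ω(t) − Σ_{i=1}^n ω(x_i)` on
`[x_n, x_{n+1})`, where `ω(x_n) ≥ 2^{n-i} ω(x_i)` for `1 ≤ i ≤ n−1`, then
`(n−2) ω(t) ≤ ω̃(t) ≤ n ω(t)` for `n ≥ 2`, and hence `ω = o(ω̃)` at infinity. -/
theorem stmt16 (ω : ℝ → ℝ)
    (hmono : MonotoneOn ω (Set.Ici 0)) (hnn : ∀ t, 0 ≤ t → 0 ≤ ω t)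
    (htop : Tendsto ω atTop atTop)
    (x : ℕ → ℝ) (hx1 : x 1 = 0)
    (hxs : ∀ n : ℕ, 1 ≤ n → x n < x (n + 1))
    (hxtop : Tendsto x atTop atTop)
    (hgrow : ∀ n : ℕ, 2 ≤ n → ∀ i : ℕ, 1 ≤ i → i ≤ n - 1 →
      (2 : ℝ) ^ (n - i) * ω (x i) ≤ ω (x n))
    (ωt : ℝ → ℝ)
    (hωt : ∀ n : ℕ, 1 ≤ n → ∀ t : ℝ, x n ≤ t → t < x (n + 1) →
      ωt t = (n : ℝ) * ω t - ∑ i ∈ Finset.Icc 1 n, ω (x i)) :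
    (∀ n : ℕ, 2 ≤ n → ∀ t : ℝ, x n ≤ t → t < x (n + 1) →
      ((n : ℝ) - 2) * ω t ≤ ωt t ∧ ωt t ≤ (n : ℝ) * ω t) ∧
    ω =o[atTop] ωt :=
  stmt16_general ω hmono hnn x hx1 hxs hxtop hgrow ωt hωt
end

section
/- Let ω be a weight function with ω(2t) = O(ω(t)) as t → ∞ (condition (ω₁)), and let (x_n) be a strictly increasing sequence with x_n > 2 x_{n-1} + n and ω(x_n) ≥ 2^{n-i} ω(x_i) for i < n. Define ω̃(t) := n ω(t) − Σ_{i=1}^n ω(x_i) on [x_n, x_{n+1}). Then ω̃ also satisfies (ω₁): ω̃(2t) = O(ω̃(t)) as t → ∞. -/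
/-!
On `[x_n, x_{n+1})` the growth condition on `ω (x i)` makes `∑_{i ≤ n} ω (x i)` at most
`2 ω(x_n) ≤ 2 ω(t)`, so `(n - 2) ω(t) ≤ ω̃(t) ≤ n ω(t)`. The gap condition `x_{n+2} > 2 x_{n+1}`
puts `2t` in `[x_n, x_{n+2})`, hence `ω̃(2t) ≤ (n + 1) ω(2t) ≤ (n + 1) C ω(t)`, and
`(n + 1) / (n - 2) ≤ 2` once `n ≥ 5`.
-/

open Filter Asymptotics

lemma sum_Icc_le_two_mul_of_le_pow_two_mul {a : ℕ → ℝ} {n : ℕ} (ha : 0 ≤ a n)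
    (h : ∀ i, 1 ≤ i → i < n → 2 ^ (n - i) * a i ≤ a n) :
    ∑ i ∈ Finset.Icc 1 n, a i ≤ 2 * a n := by
  have hterm : ∀ i ∈ Finset.Icc 1 n, a i ≤ (1 / 2 : ℝ) ^ (n - i) * a n := by
    intro i hi
    obtain ⟨hi1, hin⟩ := Finset.mem_Icc.mp hi
    rcases hin.lt_or_eq with hin | rfl
    · rw [one_div, inv_pow, inv_mul_eq_div, le_div_iff₀ (by positivity), mul_comm]
      exact h i hi1 hin
    · simp
  have hgeom : ∑ i ∈ Finset.Icc 1 n, (1 / 2 : ℝ) ^ (n - i) ≤ 2 :=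
    calc ∑ i ∈ Finset.Icc 1 n, (1 / 2 : ℝ) ^ (n - i)
        ≤ ∑ i ∈ Finset.range (n + 1), (1 / 2 : ℝ) ^ (n + 1 - 1 - i) :=
          Finset.sum_le_sum_of_subset_of_nonneg
            (fun i hi => Finset.mem_range.mpr (Nat.lt_succ_of_le (Finset.mem_Icc.mp hi).2))
            (fun _ _ _ => by positivity)
      _ = ∑ i ∈ Finset.range (n + 1), (1 / 2 : ℝ) ^ i :=
          Finset.sum_range_reflect (fun i => (1 / 2 : ℝ) ^ i) (n + 1)
      _ ≤ 2 := sum_geometric_two_le _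
  calc ∑ i ∈ Finset.Icc 1 n, a i
      ≤ ∑ i ∈ Finset.Icc 1 n, (1 / 2 : ℝ) ^ (n - i) * a n := Finset.sum_le_sum hterm
    _ = (∑ i ∈ Finset.Icc 1 n, (1 / 2 : ℝ) ^ (n - i)) * a n := (Finset.sum_mul ..).symm
    _ ≤ 2 * a n := mul_le_mul_of_nonneg_right hgeom ha

lemma exists_le_lt_succ_of_tendsto_atTop {x : ℕ → ℝ} (hx : Tendsto x atTop atTop) {m : ℕ}
    {t : ℝ} (ht : x m ≤ t) : ∃ n, m ≤ n ∧ x n ≤ t ∧ t < x (n + 1) := by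
  classical
  have hex : ∃ k, t < x (k + m) :=
    ((tendsto_add_atTop_iff_nat m).mpr hx |>.eventually_gt_atTop t).exists
  obtain ⟨j, hj⟩ : ∃ j, Nat.find hex = j + 1 :=
    Nat.exists_eq_succ_of_ne_zero fun h0 => (Nat.find_spec hex).not_ge (by simpa [h0] using ht)
  refine ⟨j + m, Nat.le_add_left m j, not_lt.mp (Nat.find_min hex (by omega)), ?_⟩
  simpa [hj, add_right_comm] using Nat.find_spec hex

section ReducedWeight

variable {ω : ℝ → ℝ} {x : ℕ → ℝ} {ωt : ℝ → ℝ}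

lemma nonneg_of_one_le_of_lt_succ (hx1 : x 1 = 0) (hxs : ∀ n : ℕ, 1 ≤ n → x n < x (n + 1))
    {n : ℕ} (hn : 1 ≤ n) : 0 ≤ x n :=
  hx1 ▸ monotoneOn_nat_Ici_of_le_succ (fun k hk => (hxs k hk).le) Set.self_mem_Ici hn hn

lemma two_mul_mem_Ico_of_mem_Ico (hxgap : ∀ n : ℕ, 2 ≤ n → 2 * x (n - 1) + (n : ℝ) < x n)
    {n : ℕ} {t : ℝ} (ht0 : 0 ≤ t) (hnt : x n ≤ t) (htn : t < x (n + 1)) :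
    ∃ m, n ≤ m ∧ m ≤ n + 1 ∧ x m ≤ 2 * t ∧ 2 * t < x (m + 1) := by
  have h2t : 2 * t < x (n + 2) := by
    have hgap := hxgap (n + 2) (by omega)
    rw [show n + 2 - 1 = n + 1 by omega] at hgap
    have : (0 : ℝ) ≤ ((n + 2 : ℕ) : ℝ) := Nat.cast_nonneg _
    linarith
  rcases lt_or_ge (2 * t) (x (n + 1)) with h | h
  · exact ⟨n, le_rfl, by omega, by linarith, h⟩
  · exact ⟨n + 1, by omega, le_rfl, h, h2t⟩

lemma sub_two_mul_le_and_le_mul_of_mem_Ico (hmono : MonotoneOn ω (Set.Ici 0))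
    (hnn : ∀ t, 0 ≤ t → 0 ≤ ω t) (hx0 : ∀ n : ℕ, 1 ≤ n → 0 ≤ x n)
    (hgrow : ∀ n : ℕ, 2 ≤ n → ∀ i : ℕ, 1 ≤ i → i ≤ n - 1 →
      (2 : ℝ) ^ (n - i) * ω (x i) ≤ ω (x n))
    (hωt : ∀ n : ℕ, 1 ≤ n → ∀ t : ℝ, x n ≤ t → t < x (n + 1) →
      ωt t = (n : ℝ) * ω t - ∑ i ∈ Finset.Icc 1 n, ω (x i))
    {n : ℕ} (hn : 1 ≤ n) {s : ℝ} (hns : x n ≤ s) (hsn : s < x (n + 1)) :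
    ((n : ℝ) - 2) * ω s ≤ ωt s ∧ ωt s ≤ n * ω s := by
  have hsum_nonneg : 0 ≤ ∑ i ∈ Finset.Icc 1 n, ω (x i) :=
    Finset.sum_nonneg fun i hi => hnn _ (hx0 i (Finset.mem_Icc.mp hi).1)
  have hsum_le : ∑ i ∈ Finset.Icc 1 n, ω (x i) ≤ 2 * ω (x n) :=
    sum_Icc_le_two_mul_of_le_pow_two_mul (hnn _ (hx0 n hn))
      fun i hi hin => hgrow n (by omega) i hi (by omega)
  have hωxn : ω (x n) ≤ ω s := hmono (hx0 n hn) ((hx0 n hn).trans hns) hns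
  rw [hωt n hn s hns hsn]
  constructor <;> linarith

lemma reduced_weight_two_mul_le (hmono : MonotoneOn ω (Set.Ici 0))
    (hnn : ∀ t, 0 ≤ t → 0 ≤ ω t) (hx0 : ∀ n : ℕ, 1 ≤ n → 0 ≤ x n)
    (hxgap : ∀ n : ℕ, 2 ≤ n → 2 * x (n - 1) + (n : ℝ) < x n)
    (hgrow : ∀ n : ℕ, 2 ≤ n → ∀ i : ℕ, 1 ≤ i → i ≤ n - 1 →
      (2 : ℝ) ^ (n - i) * ω (x i) ≤ ω (x n))
    (hωt : ∀ n : ℕ, 1 ≤ n → ∀ t : ℝ, x n ≤ t → t < x (n + 1) →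
      ωt t = (n : ℝ) * ω t - ∑ i ∈ Finset.Icc 1 n, ω (x i))
    {C : ℝ} (hC : 0 ≤ C) {n : ℕ} (hn : 5 ≤ n) {t : ℝ} (ht0 : 0 ≤ t) (hnt : x n ≤ t)
    (htn : t < x (n + 1)) (hω2t : ω (2 * t) ≤ C * ω t) :
    0 ≤ ωt (2 * t) ∧ 0 ≤ ωt t ∧ ωt (2 * t) ≤ 2 * C * ωt t := by
  have hn' : (5 : ℝ) ≤ n := by exact_mod_cast hn
  have hωt0 := hnn t ht0
  have hω2t0 := hnn (2 * t) (by linarith)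
  obtain ⟨hlow, -⟩ :=
    sub_two_mul_le_and_le_mul_of_mem_Ico hmono hnn hx0 hgrow hωt (by omega) hnt htn
  obtain ⟨m, hnm, hmn, hm2t, h2tm⟩ := two_mul_mem_Ico_of_mem_Ico hxgap ht0 hnt htn
  obtain ⟨hlow2, hup2⟩ :=
    sub_two_mul_le_and_le_mul_of_mem_Ico hmono hnn hx0 hgrow hωt (by omega) hm2t h2tm
  have hm : (n : ℝ) ≤ m ∧ (m : ℝ) ≤ n + 1 := ⟨by exact_mod_cast hnm, by exact_mod_cast hmn⟩
  refine ⟨by nlinarith, by nlinarith, ?_⟩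
  calc ωt (2 * t) ≤ m * ω (2 * t) := hup2
    _ ≤ (n + 1) * (C * ω t) := mul_le_mul hm.2 hω2t hω2t0 (by linarith)
    _ ≤ 2 * C * ((n - 2) * ω t) := by nlinarith [mul_nonneg hC hωt0]
    _ ≤ 2 * C * ωt t := mul_le_mul_of_nonneg_left hlow (by linarith)

end ReducedWeight

theorem stmt17_general (ω : ℝ → ℝ)
    (hmono : MonotoneOn ω (Set.Ici 0))
    (hnn : ∀ t, 0 ≤ t → 0 ≤ ω t)
    (hom1 : (fun t : ℝ => ω (2 * t)) =O[atTop] ω)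
    (x : ℕ → ℝ) (hx1 : x 1 = 0)
    (hxs : ∀ n : ℕ, 1 ≤ n → x n < x (n + 1))
    (hxtop : Tendsto x atTop atTop)
    (hxgap : ∀ n : ℕ, 2 ≤ n → 2 * x (n - 1) + (n : ℝ) < x n)
    (hgrow : ∀ n : ℕ, 2 ≤ n → ∀ i : ℕ, 1 ≤ i → i ≤ n - 1 →
      (2 : ℝ) ^ (n - i) * ω (x i) ≤ ω (x n))
    (ωt : ℝ → ℝ)
    (hωt : ∀ n : ℕ, 1 ≤ n → ∀ t : ℝ, x n ≤ t → t < x (n + 1) →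
      ωt t = (n : ℝ) * ω t - ∑ i ∈ Finset.Icc 1 n, ω (x i)) :
    (fun t : ℝ => ωt (2 * t)) =O[atTop] ωt := by
  have hx0 : ∀ n : ℕ, 1 ≤ n → 0 ≤ x n := fun n hn => nonneg_of_one_le_of_lt_succ hx1 hxs hn
  obtain ⟨C, hC, hCω⟩ := hom1.exists_nonneg
  refine isBigO_iff.mpr ⟨2 * C, ?_⟩
  filter_upwards [hCω.bound, eventually_ge_atTop (x 5), eventually_ge_atTop 0]
    with t hCt ht5 ht0
  obtain ⟨n, hn, hnt, htn⟩ := exists_le_lt_succ_of_tendsto_atTop hxtop ht5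
  have hω2t : ω (2 * t) ≤ C * ω t := by
    rwa [Real.norm_of_nonneg (hnn _ (by linarith)), Real.norm_of_nonneg (hnn t ht0)] at hCt
  obtain ⟨h2t0, ht0', hle⟩ :=
    reduced_weight_two_mul_le hmono hnn hx0 hxgap hgrow hωt hC hn ht0 hnt htn hω2t
  rwa [Real.norm_of_nonneg h2t0, Real.norm_of_nonneg ht0']

/-- If the weight function `ω` satisfies `(ω₁)` (`ω(2t) = O(ω(t))`) and `ω̃` is constructed
from `ω` as in the reduction lemma (with `x_n > 2 x_{n-1} + n`), then `ω̃` also satisfies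
`(ω₁)`: `ω̃(2t) = O(ω̃(t))` as `t → ∞`. -/
theorem stmt17 (ω : ℝ → ℝ)
    (hc : ContinuousOn ω (Set.Ici 0)) (hmono : MonotoneOn ω (Set.Ici 0))
    (hnn : ∀ t, 0 ≤ t → 0 ≤ ω t) (h0 : ω 0 = 0)
    (htop : Tendsto ω atTop atTop)
    (hom1 : (fun t : ℝ => ω (2 * t)) =O[atTop] ω)
    (x : ℕ → ℝ) (hx1 : x 1 = 0)
    (hxs : ∀ n : ℕ, 1 ≤ n → x n < x (n + 1))
    (hxtop : Tendsto x atTop atTop)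
    (hxgap : ∀ n : ℕ, 2 ≤ n → 2 * x (n - 1) + (n : ℝ) < x n)
    (hgrow : ∀ n : ℕ, 2 ≤ n → ∀ i : ℕ, 1 ≤ i → i ≤ n - 1 →
      (2 : ℝ) ^ (n - i) * ω (x i) ≤ ω (x n))
    (ωt : ℝ → ℝ)
    (hωt : ∀ n : ℕ, 1 ≤ n → ∀ t : ℝ, x n ≤ t → t < x (n + 1) →
      ωt t = (n : ℝ) * ω t - ∑ i ∈ Finset.Icc 1 n, ω (x i)) :
    (fun t : ℝ => ωt (2 * t)) =O[atTop] ωt :=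
  stmt17_general ω hmono hnn hom1 x hx1 hxs hxtop hxgap hgrow ωt hωt
end
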